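/- For a radial function f on ℝ², the function g(r) := -∫_r^∞ f(s) ds satisfies ‖g‖_{L²(ℝ²)} ≲ ‖f‖_{L¹(ℝ²)}, where L^p norms of radial functions are taken with respect to two-dimensional Lebesgue measure (i.e., measure r dr up to constant). -/

import Mathlib

/-!
The tail `H r = ∫⁻ s in Ioi r, ‖f s‖ₑ` dominates `‖g r‖ₑ`. Expanding `H r ^ 2` as a double integral
and integrating in `r` first (Tonelli),
`∫ r H(r)² dr = ∫∫ |f(s)| |f(t)| (∫_0^{min s t} r dr) ds dt`, and `∫_0^{min s t} r dr ≤ s t`;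
the right-hand side is then at most `(∫ s |f(s)| ds)²`, so the constant `1` works.
-/

open MeasureTheory Set
open scoped ENNReal NNReal

/-- The 2D Lebesgue measure on radial profiles: `r dr` on `(0, ∞)`. -/
noncomputable def radialMeasure : Measure ℝ :=
  (volume.restrict (Set.Ioi (0 : ℝ))).withDensity fun r => ENNReal.ofReal r

theorem mul_indicator_Ioi_mul_indicator_Ioi {α M : Type*} [LinearOrder α] [CommMonoidWithZero M]
    (w F : α → M) (r s t : α) :
    w r * ((Ioi r).indicator F s * (Ioi r).indicator F t)
      = (Iio (min s t)).indicator w r * (F s * F t) := by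
  by_cases hs : r < s <;> by_cases ht : r < t <;> simp [hs, ht]

theorem lintegral_mul_sq_setLIntegral_Ioi {ν : Measure ℝ} [SFinite ν] {w F : ℝ → ℝ≥0∞}
    (hw : Measurable w) (hF : Measurable F) :
    ∫⁻ r, w r * (∫⁻ s in Ioi r, F s ∂ν) ^ 2 ∂ν
      = ∫⁻ p, (∫⁻ r in Iio (min p.1 p.2), w r ∂ν) * (F p.1 * F p.2) ∂ν.prod ν := by
  have hkernel : Measurable fun q : ℝ × ℝ × ℝ =>
      (Iio (min q.2.1 q.2.2)).indicator w q.1 * (F q.2.1 * F q.2.2) := by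
    refine Measurable.mul ?_ (by fun_prop)
    simp only [indicator_apply, mem_Iio]
    exact Measurable.ite (measurableSet_lt measurable_fst (by fun_prop)) (by fun_prop)
      measurable_const
  calc ∫⁻ r, w r * (∫⁻ s in Ioi r, F s ∂ν) ^ 2 ∂ν
      = ∫⁻ r, ∫⁻ p, (Iio (min p.1 p.2)).indicator w r * (F p.1 * F p.2) ∂ν.prod ν ∂ν := by
        refine lintegral_congr fun r => ?_
        have hFr : Measurable ((Ioi r).indicator F) := hF.indicator measurableSet_Ioi
        rw [← lintegral_indicator measurableSet_Ioi, sq,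
          ← lintegral_prod_mul hFr.aemeasurable hFr.aemeasurable,
          ← lintegral_const_mul _ (by fun_prop)]
        simp only [mul_indicator_Ioi_mul_indicator_Ioi]
    _ = ∫⁻ p, ∫⁻ r, (Iio (min p.1 p.2)).indicator w r * (F p.1 * F p.2) ∂ν ∂ν.prod ν :=
        lintegral_lintegral_swap hkernel.aemeasurable
    _ = _ := by
        refine lintegral_congr fun p => ?_
        rw [lintegral_mul_const _ (hw.indicator measurableSet_Iio),
          lintegral_indicator measurableSet_Iio]

theorem eLpNorm_two_sq {α ε : Type*} [MeasurableSpace α] [ENorm ε] (μ : Measure α) (f : α → ε) :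
    eLpNorm f 2 μ ^ 2 = ∫⁻ x, ‖f x‖ₑ ^ 2 ∂μ := by
  simpa using eLpNorm_nnreal_pow_eq_lintegral (μ := μ) (f := f) (p := 2) two_ne_zero

theorem lintegral_radialMeasure {g : ℝ → ℝ≥0∞} (hg : Measurable g) :
    ∫⁻ r, g r ∂radialMeasure = ∫⁻ r, ENNReal.ofReal r * g r := by
  rw [radialMeasure, lintegral_withDensity_eq_lintegral_mul _ ENNReal.measurable_ofReal hg]
  refine setLIntegral_eq_of_support_subset fun r hr => ?_
  contrapose! hr
  rw [mem_Ioi, not_lt] at hr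
  simp [ENNReal.ofReal_of_nonpos hr]

theorem setLIntegral_Iio_ofReal_le (m : ℝ) :
    ∫⁻ r in Iio m, ENNReal.ofReal r ≤ ENNReal.ofReal m ^ 2 := by
  calc ∫⁻ r in Iio m, ENNReal.ofReal r
      ≤ ∫⁻ r in Iio m, (Ioi 0).indicator (fun _ => ENNReal.ofReal m) r := by
        refine setLIntegral_mono (measurable_const.indicator measurableSet_Ioi) fun r hr => ?_
        by_cases h : 0 < r
        · simpa [h] using ENNReal.ofReal_le_ofReal hr.out.le
        · simp [h, not_lt.mp h]
    _ = ENNReal.ofReal m ^ 2 := by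
        rw [lintegral_indicator_const measurableSet_Ioi, Measure.restrict_apply measurableSet_Ioi,
          Ioi_inter_Iio, Real.volume_Ioo, sub_zero, sq]

theorem lintegral_radialMeasure_sq_setLIntegral_Ioi_le {F : ℝ → ℝ≥0∞} (hF : Measurable F) :
    ∫⁻ r, (∫⁻ s in Ioi r, F s) ^ 2 ∂radialMeasure ≤ (∫⁻ s, F s ∂radialMeasure) ^ 2 := by
  have htail : Measurable fun r => (∫⁻ s in Ioi r, F s) ^ 2 :=
    Antitone.measurable fun r r' h => pow_le_pow_left' (lintegral_mono_set (Ioi_subset_Ioi h)) 2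
  have hG : Measurable fun s => ENNReal.ofReal s * F s := by fun_prop
  rw [lintegral_radialMeasure htail, lintegral_radialMeasure hF,
    lintegral_mul_sq_setLIntegral_Ioi ENNReal.measurable_ofReal hF, sq,
    ← lintegral_prod_mul hG.aemeasurable hG.aemeasurable]
  refine lintegral_mono fun p => ?_
  calc (∫⁻ r in Iio (min p.1 p.2), ENNReal.ofReal r) * (F p.1 * F p.2)
      ≤ ENNReal.ofReal (min p.1 p.2) ^ 2 * (F p.1 * F p.2) := by
        gcongr; exact setLIntegral_Iio_ofReal_le _
    _ ≤ ENNReal.ofReal p.1 * ENNReal.ofReal p.2 * (F p.1 * F p.2) := by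
        rw [sq]; gcongr <;> simp
    _ = ENNReal.ofReal p.1 * F p.1 * (ENNReal.ofReal p.2 * F p.2) := by ring

/-- For a radial function `f` on `ℝ²`, the function
`g(r) = -∫_r^∞ f(s) ds` satisfies `‖g‖_{L²(ℝ²)} ≲ ‖f‖_{L¹(ℝ²)}`,
with `L^p` norms taken with respect to 2D Lebesgue measure (`r dr`). -/
theorem l2_bound_antiderivative : ∃ C : ℝ≥0, ∀ f : ℝ → ℝ, Measurable f →
    eLpNorm (fun r => -∫ s in Set.Ioi r, f s) 2 radialMeasure
      ≤ C * eLpNorm f 1 radialMeasure := by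
  refine ⟨1, fun f hf => ?_⟩
  have hF : Measurable fun s => ‖f s‖ₑ := hf.enorm
  have hpointwise (r : ℝ) : ‖-∫ s in Ioi r, f s‖ₑ ≤ ‖∫⁻ s in Ioi r, ‖f s‖ₑ‖ₑ := by
    simpa using enorm_integral_le_lintegral_enorm _
  calc eLpNorm (fun r => -∫ s in Ioi r, f s) 2 radialMeasure
      ≤ eLpNorm (fun r => ∫⁻ s in Ioi r, ‖f s‖ₑ) 2 radialMeasure :=
        eLpNorm_mono_enorm hpointwise
    _ ≤ eLpNorm f 1 radialMeasure := by
        rw [← ENNReal.pow_le_pow_left_iff two_ne_zero, eLpNorm_two_sq,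
          eLpNorm_one_eq_lintegral_enorm]
        exact lintegral_radialMeasure_sq_setLIntegral_Ioi_le hF
    _ = 1 * eLpNorm f 1 radialMeasure := by simp
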